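/- arXiv:2601.20153 — 10 statements merged into one kernel-verified Lean document; each statement's English description precedes it below -/
import Mathlib

section
/- For every finite simple graph G, G has an LD-code and the LD-number of G is at most the L-number of G plus one, i.e., γ^LD(G) ≤ γ^L(G) + 1. -/
open Finset

namespace SepDom

variable {V : Type*} [Fintype V] [DecidableEq V]

/-- The closed neighborhood `N[v]` of a vertex as a `Finset`. -/
def closedNbhd (G : SimpleGraph V) [DecidableRel G.Adj] (v : V) : Finset V :=
  insert v (G.neighborFinset v)

/-- `C` is a dominating set: `N[v] ∩ C ≠ ∅` for all `v`. -/
def IsDomSet (G : SimpleGraph V) [DecidableRel G.Adj] (C : Finset V) : Prop :=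
  ∀ v : V, (closedNbhd G v ∩ C).Nonempty

/-- `C` is a total-dominating set: `N(v) ∩ C ≠ ∅` for all `v`. -/
def IsTotalDomSet (G : SimpleGraph V) [DecidableRel G.Adj] (C : Finset V) : Prop :=
  ∀ v : V, (G.neighborFinset v ∩ C).Nonempty

/-- `C` is a locating set (L-set): the sets `N(v) ∩ C`, `v ∉ C`, are pairwise distinct. -/
def IsLSet (G : SimpleGraph V) [DecidableRel G.Adj] (C : Finset V) : Prop :=
  ∀ u ∉ C, ∀ v ∉ C, G.neighborFinset u ∩ C = G.neighborFinset v ∩ C → u = v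

/-- `C` is an open-separating set (O-set): the sets `N(v) ∩ C` are pairwise distinct. -/
def IsOSet (G : SimpleGraph V) [DecidableRel G.Adj] (C : Finset V) : Prop :=
  ∀ u v : V, G.neighborFinset u ∩ C = G.neighborFinset v ∩ C → u = v

/-- `C` is a closed-separating set (I-set): the sets `N[v] ∩ C` are pairwise distinct. -/
def IsISet (G : SimpleGraph V) [DecidableRel G.Adj] (C : Finset V) : Prop :=
  ∀ u v : V, closedNbhd G u ∩ C = closedNbhd G v ∩ C → u = v

/-- `C` is a full-separating set (F-set): both open- and closed-separating. -/
def IsFSet (G : SimpleGraph V) [DecidableRel G.Adj] (C : Finset V) : Prop :=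
  IsOSet G C ∧ IsISet G C

/-- `G` has open twins: distinct non-adjacent vertices with equal open neighborhoods. -/
def HasOpenTwins (G : SimpleGraph V) [DecidableRel G.Adj] : Prop :=
  ∃ u v : V, u ≠ v ∧ ¬ G.Adj u v ∧ G.neighborFinset u = G.neighborFinset v

/-- `G` has closed twins: distinct adjacent vertices with equal closed neighborhoods. -/
def HasClosedTwins (G : SimpleGraph V) [DecidableRel G.Adj] : Prop :=
  ∃ u v : V, u ≠ v ∧ G.Adj u v ∧ closedNbhd G u = closedNbhd G v

/-- `G` has an isolated vertex: a vertex with empty open neighborhood. -/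
def HasIsolated (G : SimpleGraph V) [DecidableRel G.Adj] : Prop :=
  ∃ v : V, G.neighborFinset v = ∅

/-- The L-number: minimum cardinality of an L-set. -/
noncomputable def lNum (G : SimpleGraph V) [DecidableRel G.Adj] : ℕ :=
  sInf {n | ∃ C : Finset V, IsLSet G C ∧ C.card = n}

/-- The O-number: minimum cardinality of an O-set. -/
noncomputable def oNum (G : SimpleGraph V) [DecidableRel G.Adj] : ℕ :=
  sInf {n | ∃ C : Finset V, IsOSet G C ∧ C.card = n}

/-- The I-number: minimum cardinality of an I-set. -/
noncomputable def iNum (G : SimpleGraph V) [DecidableRel G.Adj] : ℕ :=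
  sInf {n | ∃ C : Finset V, IsISet G C ∧ C.card = n}

/-- The F-number: minimum cardinality of an F-set. -/
noncomputable def fNum (G : SimpleGraph V) [DecidableRel G.Adj] : ℕ :=
  sInf {n | ∃ C : Finset V, IsFSet G C ∧ C.card = n}

/-- The LD-number: minimum cardinality of an LD-code. -/
noncomputable def ldNum (G : SimpleGraph V) [DecidableRel G.Adj] : ℕ :=
  sInf {n | ∃ C : Finset V, IsDomSet G C ∧ IsLSet G C ∧ C.card = n}

/-- The OD-number: minimum cardinality of an OD-code. -/
noncomputable def odNum (G : SimpleGraph V) [DecidableRel G.Adj] : ℕ :=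
  sInf {n | ∃ C : Finset V, IsDomSet G C ∧ IsOSet G C ∧ C.card = n}

/-- The ID-number: minimum cardinality of an ID-code. -/
noncomputable def idNum (G : SimpleGraph V) [DecidableRel G.Adj] : ℕ :=
  sInf {n | ∃ C : Finset V, IsDomSet G C ∧ IsISet G C ∧ C.card = n}

/-- The FD-number: minimum cardinality of an FD-code. -/
noncomputable def fdNum (G : SimpleGraph V) [DecidableRel G.Adj] : ℕ :=
  sInf {n | ∃ C : Finset V, IsDomSet G C ∧ IsFSet G C ∧ C.card = n}

/-- The LTD-number: minimum cardinality of an LTD-code. -/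
noncomputable def ltdNum (G : SimpleGraph V) [DecidableRel G.Adj] : ℕ :=
  sInf {n | ∃ C : Finset V, IsTotalDomSet G C ∧ IsLSet G C ∧ C.card = n}

/-- The OTD-number: minimum cardinality of an OTD-code. -/
noncomputable def otdNum (G : SimpleGraph V) [DecidableRel G.Adj] : ℕ :=
  sInf {n | ∃ C : Finset V, IsTotalDomSet G C ∧ IsOSet G C ∧ C.card = n}

/-- The ITD-number: minimum cardinality of an ITD-code. -/
noncomputable def itdNum (G : SimpleGraph V) [DecidableRel G.Adj] : ℕ :=
  sInf {n | ∃ C : Finset V, IsTotalDomSet G C ∧ IsISet G C ∧ C.card = n}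

/-- The FTD-number: minimum cardinality of an FTD-code. -/
noncomputable def ftdNum (G : SimpleGraph V) [DecidableRel G.Adj] : ℕ :=
  sInf {n | ∃ C : Finset V, IsTotalDomSet G C ∧ IsFSet G C ∧ C.card = n}

end SepDom

open SepDom

namespace SepDom

variable {V : Type*} [Fintype V] [DecidableEq V] {G : SimpleGraph V} [DecidableRel G.Adj]

theorem isLSet_univ : IsLSet G univ := fun u hu => absurd (mem_univ u) hu

theorem IsLSet.mono {C D : Finset V} (hC : IsLSet G C) (hCD : C ⊆ D) : IsLSet G D := by
  intro u hu v hv huv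
  refine hC u (fun h => hu (hCD h)) v (fun h => hv (hCD h)) ?_
  have hrestrict : ∀ x, G.neighborFinset x ∩ D ∩ C = G.neighborFinset x ∩ C := fun x => by
    rw [inter_assoc, inter_eq_right.mpr hCD]
  rw [← hrestrict u, ← hrestrict v, huv]

theorem closedNbhd_inter_eq_empty_iff {C : Finset V} {v : V} :
    closedNbhd G v ∩ C = ∅ ↔ v ∉ C ∧ G.neighborFinset v ∩ C = ∅ := by
  by_cases hv : v ∈ C <;> simp [closedNbhd, insert_inter_of_mem, insert_inter_of_notMem, hv]

/-- Undominated vertices all have the empty trace `N(v) ∩ C`, so a locating set leaves at most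
one of them. -/
theorem IsLSet.eq_of_not_dominated {C : Finset V} (hC : IsLSet G C) {u v : V}
    (hu : closedNbhd G u ∩ C = ∅) (hv : closedNbhd G v ∩ C = ∅) : u = v := by
  rw [closedNbhd_inter_eq_empty_iff] at hu hv
  exact hC u hu.1 v hv.1 (hu.2.trans hv.2.symm)

theorem IsLSet.exists_isDomSet_card_le_succ {C : Finset V} (hC : IsLSet G C) :
    ∃ D : Finset V, IsDomSet G D ∧ IsLSet G D ∧ D.card ≤ C.card + 1 := by
  by_cases hdom : IsDomSet G C
  · exact ⟨C, hdom, hC, Nat.le_succ _⟩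
  obtain ⟨w, hw⟩ : ∃ w, closedNbhd G w ∩ C = ∅ := by
    simpa [IsDomSet, not_nonempty_iff_eq_empty] using hdom
  refine ⟨insert w C, fun v => ?_, hC.mono (subset_insert w C), card_insert_le w C⟩
  by_cases hv : closedNbhd G v ∩ C = ∅
  · obtain rfl := hC.eq_of_not_dominated hv hw
    exact ⟨v, mem_inter.mpr ⟨mem_insert_self v _, mem_insert_self v C⟩⟩
  · exact (nonempty_iff_ne_empty.mpr hv).mono (inter_subset_inter_left (subset_insert w C))

theorem exists_isLSet_card_eq_lNum : ∃ C : Finset V, IsLSet G C ∧ C.card = lNum G :=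
  Nat.sInf_mem (s := {n | ∃ C : Finset V, IsLSet G C ∧ C.card = n}) ⟨_, univ, isLSet_univ, rfl⟩

end SepDom

theorem ld_le_l_add_one {V : Type*} [Fintype V] [DecidableEq V]
    (G : SimpleGraph V) [DecidableRel G.Adj] :
    (∃ C : Finset V, IsDomSet G C ∧ IsLSet G C) ∧ ldNum G ≤ lNum G + 1 := by
  obtain ⟨C, hCL, hCcard⟩ := exists_isLSet_card_eq_lNum (G := G)
  obtain ⟨D, hDdom, hDL, hDcard⟩ := hCL.exists_isDomSet_card_le_succ
  refine ⟨⟨D, hDdom, hDL⟩, ?_⟩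
  calc ldNum G ≤ D.card := Nat.sInf_le ⟨D, hDdom, hDL, rfl⟩
    _ ≤ lNum G + 1 := hCcard ▸ hDcard
end

section
/- For every finite simple graph G without open twins, G has an OD-code and the OD-number of G is at most the O-number of G plus one, i.e., γ^OD(G) ≤ γ^O(G) + 1. -/
open Finset

open SepDom

theorem od_le_o_add_one {V : Type*} [Fintype V] [DecidableEq V]
    (G : SimpleGraph V) [DecidableRel G.Adj] (hOT : ¬ HasOpenTwins G) :
    (∃ C : Finset V, IsDomSet G C ∧ IsOSet G C) ∧ odNum G ≤ oNum G + 1 := by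
  classical
  -- univ is an O-set
  have hU : IsOSet G (Finset.univ : Finset V) := by
    intro u v h
    simp only [Finset.inter_univ] at h
    by_contra hne
    by_cases hadj : G.Adj u v
    · have : u ∈ G.neighborFinset v := by
        simp [SimpleGraph.mem_neighborFinset, hadj.symm]
      rw [← h] at this
      simp [SimpleGraph.mem_neighborFinset] at this
    · exact hOT ⟨u, v, hne, hadj, h⟩
  have hne : {n | ∃ C : Finset V, IsOSet G C ∧ C.card = n}.Nonempty :=
    ⟨_, Finset.univ, hU, rfl⟩
  obtain ⟨C, hC, hcard⟩ := Nat.sInf_mem hne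
  -- supersets of O-sets are O-sets
  have ext : ∀ D : Finset V, C ⊆ D → IsOSet G D := by
    intro D hCD u v h
    apply hC u v
    ext x
    simp only [Finset.mem_inter]
    constructor
    · rintro ⟨hx1, hx2⟩
      have hx : x ∈ G.neighborFinset u ∩ D := Finset.mem_inter.2 ⟨hx1, hCD hx2⟩
      rw [h] at hx
      exact ⟨(Finset.mem_inter.1 hx).1, hx2⟩
    · rintro ⟨hx1, hx2⟩
      have hx : x ∈ G.neighborFinset v ∩ D := Finset.mem_inter.2 ⟨hx1, hCD hx2⟩
      rw [← h] at hx
      exact ⟨(Finset.mem_inter.1 hx).1, hx2⟩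
  by_cases hdom : IsDomSet G C
  · refine ⟨⟨C, hdom, hC⟩, ?_⟩
    calc odNum G ≤ C.card := Nat.sInf_le ⟨C, hdom, hC, rfl⟩
    _ ≤ oNum G + 1 := by unfold oNum; omega
  · simp only [IsDomSet, not_forall] at hdom
    obtain ⟨v, hv⟩ := hdom
    have hvempty : closedNbhd G v ∩ C = ∅ := Finset.not_nonempty_iff_eq_empty.1 hv
    set C' : Finset V := insert v C with hC'
    have hsub : C ⊆ C' := Finset.subset_insert _ _
    have hO' : IsOSet G C' := ext C' hsub
    have hD' : IsDomSet G C' := by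
      intro w
      by_cases hw : (closedNbhd G w ∩ C).Nonempty
      · obtain ⟨x, hx⟩ := hw
        exact ⟨x, Finset.mem_inter.2 ⟨(Finset.mem_inter.1 hx).1,
          hsub (Finset.mem_inter.1 hx).2⟩⟩
      · have hwe : closedNbhd G w ∩ C = ∅ := Finset.not_nonempty_iff_eq_empty.1 hw
        have hsubN : ∀ z : V, G.neighborFinset z ⊆ closedNbhd G z := fun z =>
          Finset.subset_insert _ _
        have h1 : G.neighborFinset w ∩ C = ∅ := Finset.subset_empty.1
          (hwe ▸ Finset.inter_subset_inter_right (hsubN w))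
        have h2 : G.neighborFinset v ∩ C = ∅ := Finset.subset_empty.1
          (hvempty ▸ Finset.inter_subset_inter_right (hsubN v))
        have hwv : w = v := hC w v (h1.trans h2.symm)
        subst hwv
        exact ⟨w, Finset.mem_inter.2 ⟨Finset.mem_insert_self _ _,
          Finset.mem_insert_self _ _⟩⟩
    refine ⟨⟨C', hD', hO'⟩, ?_⟩
    calc odNum G ≤ C'.card := Nat.sInf_le ⟨C', hD', hO', rfl⟩
    _ ≤ C.card + 1 := Finset.card_insert_le _ _
    _ ≤ oNum G + 1 := by unfold oNum; omega
end

section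
/- For every finite simple graph G without open twins and without closed twins, G has an FD-code and the FD-number of G is at most the F-number of G plus one, i.e., γ^FD(G) ≤ γ^F(G) + 1. -/
open Finset

/-!
A minimum F-set `C` is in particular closed-separating, so at most one vertex `v` has
`N[v] ∩ C = ∅`; adding that vertex to `C` yields a dominating set, and supersets of F-sets are
F-sets. Without twins the whole vertex set is an F-set, so a minimum F-set exists.
-/

namespace SepDom

theorem inter_eq_inter_of_subset {α : Type*} [DecidableEq α] {A B C C' : Finset α}
    (hCC' : C ⊆ C') (h : A ∩ C' = B ∩ C') : A ∩ C = B ∩ C := by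
  rw [← inter_eq_right.2 hCC', ← inter_assoc, ← inter_assoc, h]

variable {V : Type*} [DecidableEq V] {G : SimpleGraph V} [Fintype V] [DecidableRel G.Adj]

theorem mem_closedNbhd {v w : V} : w ∈ closedNbhd G v ↔ w = v ∨ G.Adj v w := by
  simp [closedNbhd]

theorem IsOSet.mono {C C' : Finset V} (hC : IsOSet G C) (hCC' : C ⊆ C') : IsOSet G C' :=
  fun u v h => hC u v (inter_eq_inter_of_subset hCC' h)

theorem IsISet.mono {C C' : Finset V} (hC : IsISet G C) (hCC' : C ⊆ C') : IsISet G C' :=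
  fun u v h => hC u v (inter_eq_inter_of_subset hCC' h)

theorem IsFSet.mono {C C' : Finset V} (hC : IsFSet G C) (hCC' : C ⊆ C') : IsFSet G C' :=
  ⟨hC.1.mono hCC', hC.2.mono hCC'⟩

theorem isOSet_univ (hOT : ¬ HasOpenTwins G) : IsOSet G univ := by
  intro u v h
  simp only [inter_univ] at h
  by_contra huv
  have hnadj : ¬ G.Adj u v := fun hadj =>
    G.irrefl ((G.mem_neighborFinset v v).1 (h ▸ (G.mem_neighborFinset u v).2 hadj))
  exact hOT ⟨u, v, huv, hnadj, h⟩

theorem isISet_univ (hCT : ¬ HasClosedTwins G) : IsISet G univ := by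
  intro u v h
  simp only [inter_univ] at h
  by_contra huv
  have hadj : G.Adj v u := by
    have hu : u ∈ closedNbhd G v := by rw [← h]; exact mem_insert_self u _
    exact (mem_closedNbhd.1 hu).resolve_left huv
  exact hCT ⟨u, v, huv, hadj.symm, h⟩

theorem isFSet_univ (hOT : ¬ HasOpenTwins G) (hCT : ¬ HasClosedTwins G) : IsFSet G univ :=
  ⟨isOSet_univ hOT, isISet_univ hCT⟩

theorem exists_isFSet_card_eq_fNum {C₀ : Finset V} (hC₀ : IsFSet G C₀) :
    ∃ C : Finset V, IsFSet G C ∧ C.card = fNum G :=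
  Nat.sInf_mem (s := {n | ∃ C : Finset V, IsFSet G C ∧ C.card = n}) ⟨_, C₀, hC₀, rfl⟩

-- A closed-separating set leaves at most one vertex undominated.
theorem IsISet.exists_superset_isDomSet_card_le_succ {C : Finset V} (hC : IsISet G C) :
    ∃ D : Finset V, C ⊆ D ∧ IsDomSet G D ∧ D.card ≤ C.card + 1 := by
  by_cases hdom : IsDomSet G C
  · exact ⟨C, Subset.rfl, hdom, Nat.le_succ _⟩
  obtain ⟨v, hv⟩ := not_forall.1 hdom
  refine ⟨insert v C, subset_insert v C, fun w => ?_, card_insert_le v C⟩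
  by_cases hw : (closedNbhd G w ∩ C).Nonempty
  · exact hw.mono (inter_subset_inter_left (subset_insert v C))
  · obtain rfl : w = v := hC w v (by
      rw [not_nonempty_iff_eq_empty.1 hw, not_nonempty_iff_eq_empty.1 hv])
    exact ⟨w, mem_inter.2 ⟨mem_insert_self w _, mem_insert_self w C⟩⟩

end SepDom

open SepDom

theorem fd_le_f_add_one {V : Type*} [Fintype V] [DecidableEq V]
    (G : SimpleGraph V) [DecidableRel G.Adj]
    (hOT : ¬ HasOpenTwins G) (hCT : ¬ HasClosedTwins G) :
    (∃ C : Finset V, IsDomSet G C ∧ IsFSet G C) ∧ fdNum G ≤ fNum G + 1 := by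
  obtain ⟨C, hCF, hCcard⟩ := exists_isFSet_card_eq_fNum (isFSet_univ hOT hCT)
  obtain ⟨D, hCD, hD, hDcard⟩ := hCF.2.exists_superset_isDomSet_card_le_succ
  have hDF : IsFSet G D := hCF.mono hCD
  refine ⟨⟨D, hD, hDF⟩, ?_⟩
  calc fdNum G ≤ D.card := Nat.sInf_le ⟨D, hD, hDF, rfl⟩
    _ ≤ fNum G + 1 := hCcard ▸ hDcard
end

section
/- For every finite simple graph G without isolated vertices and without closed twins, G has an ITD-code and the ITD-number of G is at most twice the I-number of G, i.e., γ^ITD(G) ≤ 2·γ^I(G). -/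
open Finset

open SepDom


section Aux
variable {V : Type*} [Fintype V] [DecidableEq V]

open Finset

lemma mem_closedNbhd' (G : SimpleGraph V) [DecidableRel G.Adj] {v x : V} :
    x ∈ closedNbhd G v ↔ x = v ∨ G.Adj v x := by
  simp [closedNbhd, SimpleGraph.mem_neighborFinset]

lemma isISet_superset (G : SimpleGraph V) [DecidableRel G.Adj] {C D : Finset V}
    (h : IsISet G C) (hCD : C ⊆ D) : IsISet G D := by
  intro u v huv
  apply h
  have hDC : D ∩ C = C := Finset.inter_eq_right.mpr hCD
  calc closedNbhd G u ∩ C = closedNbhd G u ∩ D ∩ C := by rw [Finset.inter_assoc, hDC]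
    _ = closedNbhd G v ∩ D ∩ C := by rw [huv]
    _ = closedNbhd G v ∩ C := by rw [Finset.inter_assoc, hDC]

end Aux

theorem itd_le_two_mul_i {V : Type*} [Fintype V] [DecidableEq V]
    (G : SimpleGraph V) [DecidableRel G.Adj]
    (hIso : ¬ HasIsolated G) (hCT : ¬ HasClosedTwins G) :
    (∃ C : Finset V, IsTotalDomSet G C ∧ IsISet G C) ∧ itdNum G ≤ 2 * iNum G := by
  classical
  -- choose a neighbor of every vertex
  have hg : ∀ v : V, ∃ w, w ∈ G.neighborFinset v := by
    intro v
    rcases Finset.eq_empty_or_nonempty (G.neighborFinset v) with h | h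
    · exact absurd ⟨v, h⟩ hIso
    · exact h
  choose g hgmem using hg
  have hgadj : ∀ v, G.Adj v (g v) := fun v =>
    (SimpleGraph.mem_neighborFinset G v (g v)).mp (hgmem v)
  -- univ is an I-set
  have hunivI : IsISet G (Finset.univ : Finset V) := by
    intro u v huv
    simp only [Finset.inter_univ] at huv
    by_contra hne
    have hv : v ∈ closedNbhd G u := by
      rw [huv]; exact (mem_closedNbhd' G).mpr (Or.inl rfl)
    have hadj : G.Adj u v := by
      rcases (mem_closedNbhd' G).mp hv with h | h
      · exact absurd h.symm hne
      · exact h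
    exact hCT ⟨u, v, hne, hadj, huv⟩
  have hSne : {n | ∃ C : Finset V, IsISet G C ∧ C.card = n}.Nonempty :=
    ⟨_, Finset.univ, hunivI, rfl⟩
  obtain ⟨C, hC, hCcard⟩ :
      ∃ C : Finset V, IsISet G C ∧ C.card = iNum G := Nat.sInf_mem hSne
  -- reduce to finding a good code
  suffices h : ∃ D : Finset V, IsTotalDomSet G D ∧ IsISet G D ∧ D.card ≤ 2 * C.card by
    obtain ⟨D, h1, h2, h3⟩ := h
    refine ⟨⟨D, h1, h2⟩, ?_⟩
    calc itdNum G ≤ D.card := Nat.sInf_le ⟨D, h1, h2, rfl⟩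
      _ ≤ 2 * C.card := h3
      _ = 2 * iNum G := by rw [hCcard]
  set B : Finset V := Finset.univ.filter (fun v => G.neighborFinset v ∩ C = ∅) with hBdef
  have hBmem : ∀ v : V, v ∈ B ↔ G.neighborFinset v ∩ C = ∅ := by
    intro v; simp [hBdef]
  have hBnot : ∀ v : V, v ∉ B → (G.neighborFinset v ∩ C).Nonempty := by
    intro v hv
    exact Finset.nonempty_iff_ne_empty.mpr (fun h => hv ((hBmem v).mpr h))
  have htrace1 : ∀ v : V, v ∉ C → closedNbhd G v ∩ C = G.neighborFinset v ∩ C :=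
    fun v h => Finset.insert_inter_of_notMem h
  have htrace2 : ∀ v ∈ C, v ∈ B → closedNbhd G v ∩ C = {v} := by
    intro v hvC hvB
    rw [closedNbhd, Finset.insert_inter_of_mem hvC, (hBmem v).mp hvB]
    rfl
  have hsep0 : ∀ v ∈ B, v ∉ C → ∀ v' ∈ B, v' ∉ C → v = v' := by
    intro v hv hvC v' hv' hv'C
    apply hC
    rw [htrace1 v hvC, htrace1 v' hv'C, (hBmem v).mp hv, (hBmem v').mp hv']
  by_cases hcard : B.card ≤ C.card
  · -- easy case: add one neighbor per bad vertex
    refine ⟨C ∪ B.image g, ?_, isISet_superset G hC Finset.subset_union_left, ?_⟩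
    · intro v
      by_cases hv : v ∈ B
      · exact ⟨g v, Finset.mem_inter.mpr ⟨hgmem v,
          Finset.mem_union_right _ (Finset.mem_image_of_mem g hv)⟩⟩
      · obtain ⟨c, hc⟩ := hBnot v hv
        rcases Finset.mem_inter.mp hc with ⟨h1, h2⟩
        exact ⟨c, Finset.mem_inter.mpr ⟨h1, Finset.mem_union_left _ h2⟩⟩
    · calc (C ∪ B.image g).card ≤ C.card + (B.image g).card := Finset.card_union_le _ _
        _ ≤ C.card + B.card := by
            exact Nat.add_le_add_left (Finset.card_image_le) _
        _ ≤ 2 * C.card := by omega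
  · -- hard case
    push_neg at hcard
    obtain ⟨u, huB, huC⟩ := Finset.not_subset.mp
      (fun h => absurd (Finset.card_le_card h) (Nat.not_le.mpr hcard))
    have hBsd : B \ C ⊆ {u} := by
      intro x hx
      rcases Finset.mem_sdiff.mp hx with ⟨hx1, hx2⟩
      exact Finset.mem_singleton.mpr (hsep0 x hx1 hx2 u huB huC)
    have hCB : C ⊆ B := by
      by_contra h
      obtain ⟨c, hcC, hcB⟩ := Finset.not_subset.mp h
      have h1 : B ∩ C ⊆ C.erase c := by
        intro x hx
        rcases Finset.mem_inter.mp hx with ⟨hx1, hx2⟩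
        exact Finset.mem_erase.mpr ⟨fun he => hcB (he ▸ hx1), hx2⟩
      have h2 : (B ∩ C).card + (B \ C).card = B.card := Finset.card_inter_add_card_sdiff B C
      have h3 : (B ∩ C).card ≤ C.card - 1 := by
        have := Finset.card_le_card h1
        rwa [Finset.card_erase_of_mem hcC] at this
      have h4 : (B \ C).card ≤ 1 := by
        have := Finset.card_le_card hBsd
        simpa using this
      have h5 : 1 ≤ C.card := Finset.card_pos.mpr ⟨c, hcC⟩
      omega
    set w := g u with hwdef
    have hwadj : G.Adj u w := hgadj u
    have hwC : w ∉ C := by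
      intro h
      have : w ∈ G.neighborFinset u ∩ C := Finset.mem_inter.mpr ⟨hgmem u, h⟩
      rw [(hBmem u).mp huB] at this
      exact absurd this (Finset.notMem_empty w)
    have hwB : w ∉ B := by
      intro h
      exact hwadj.ne' (hsep0 w h hwC u huB huC)
    obtain ⟨c1, hc1⟩ := hBnot w hwB
    rcases Finset.mem_inter.mp hc1 with ⟨hc1n, hc1C⟩
    have hc2ex : ∃ c2 ∈ G.neighborFinset w ∩ C, c2 ≠ c1 := by
      by_contra h
      push_neg at h
      have heq : G.neighborFinset w ∩ C = {c1} := by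
        apply Finset.eq_singleton_iff_unique_mem.mpr
        exact ⟨hc1, fun x hx => h x hx⟩
      have h1 : closedNbhd G w ∩ C = {c1} := (htrace1 w hwC).trans heq
      have h2 : closedNbhd G c1 ∩ C = {c1} := htrace2 c1 hc1C (hCB hc1C)
      have := hC w c1 (h1.trans h2.symm)
      exact hwC (this ▸ hc1C)
    obtain ⟨c2, hc2, hc2ne⟩ := hc2ex
    rcases Finset.mem_inter.mp hc2 with ⟨hc2n, hc2C⟩
    refine ⟨insert w (C ∪ ((C.erase c1).erase c2).image g), ?_, ?_, ?_⟩
    · -- total dominating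
      intro v
      by_cases hvB : v ∈ B
      · by_cases hvC : v ∈ C
        · by_cases hv1 : v = c1
          · refine ⟨w, Finset.mem_inter.mpr ⟨?_, Finset.mem_insert_self _ _⟩⟩
            rw [SimpleGraph.mem_neighborFinset, hv1]
            exact ((SimpleGraph.mem_neighborFinset G w c1).mp hc1n).symm
          · by_cases hv2 : v = c2
            · refine ⟨w, Finset.mem_inter.mpr ⟨?_, Finset.mem_insert_self _ _⟩⟩
              rw [SimpleGraph.mem_neighborFinset, hv2]
              exact ((SimpleGraph.mem_neighborFinset G w c2).mp hc2n).symm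
            · refine ⟨g v, Finset.mem_inter.mpr ⟨hgmem v, ?_⟩⟩
              apply Finset.mem_insert_of_mem
              apply Finset.mem_union_right
              exact Finset.mem_image_of_mem g
                (Finset.mem_erase.mpr ⟨hv2, Finset.mem_erase.mpr ⟨hv1, hvC⟩⟩)
        · have hvu : v = u := Finset.mem_singleton.mp
            (hBsd (Finset.mem_sdiff.mpr ⟨hvB, hvC⟩))
          refine ⟨w, Finset.mem_inter.mpr ⟨?_, Finset.mem_insert_self _ _⟩⟩
          rw [SimpleGraph.mem_neighborFinset, hvu]
          exact hwadj
      · obtain ⟨c, hc⟩ := hBnot v hvB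
        rcases Finset.mem_inter.mp hc with ⟨h1, h2⟩
        exact ⟨c, Finset.mem_inter.mpr ⟨h1,
          Finset.mem_insert_of_mem (Finset.mem_union_left _ h2)⟩⟩
    · exact isISet_superset G hC
        (fun x hx => Finset.mem_insert_of_mem (Finset.mem_union_left _ hx))
    · have h2le : 2 ≤ C.card := by
        have : ({c2, c1} : Finset V) ⊆ C := by
          intro x hx
          rcases Finset.mem_insert.mp hx with h | h
          · exact h ▸ hc2C
          · exact (Finset.mem_singleton.mp h) ▸ hc1C
        have := Finset.card_le_card this
        rwa [Finset.card_insert_of_notMem (by simpa using hc2ne),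
          Finset.card_singleton] at this
      have hecard : ((C.erase c1).erase c2).card = C.card - 2 := by
        rw [Finset.card_erase_of_mem
          (Finset.mem_erase.mpr ⟨hc2ne, hc2C⟩), Finset.card_erase_of_mem hc1C]
        omega
      calc (insert w (C ∪ ((C.erase c1).erase c2).image g)).card
          ≤ (C ∪ ((C.erase c1).erase c2).image g).card + 1 :=
            Finset.card_insert_le _ _
        _ ≤ (C.card + (((C.erase c1).erase c2).image g).card) + 1 :=
            Nat.add_le_add_right (Finset.card_union_le _ _) 1
        _ ≤ (C.card + (C.card - 2)) + 1 :=
            Nat.add_le_add_right (Nat.add_le_add_left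
              (hecard ▸ Finset.card_image_le) _) 1
        _ ≤ 2 * C.card := by omega
end

section
/- For every integer k ≥ 4, the thin headless spider H_k satisfies γ^L(H_k) = k − 1 and γ^O(H_k) = k − 1. -/
/-! Removing one clique vertex `q_a` leaves an O-set of size `k - 1`: any two vertices are told
apart by some `q_t` with `t ≠ a`; for two clique vertices or two legs one of their two indices
works, and for `q_i` against `s_j` any `t ∉ {i, j, a}` does, which exists as `k ≥ 4`.
Conversely, if `C` is an L-set, at most one index `i` has neither `q_i` nor `s_i` in `C`, since
the leg `s_i` of such an index has empty trace; so `C` meets the other `k - 1` pairs `{q_i, s_i}`. -/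

open Finset

open SepDom

/-- The thin headless spider `H_k`: vertices `Sum.inl i` form the clique `Q`,
vertices `Sum.inr i` form the stable set `S`, and `q_i` is adjacent to `s_j` iff `i = j`. -/
def thinSpider (k : ℕ) : SimpleGraph (Fin k ⊕ Fin k) where
  Adj u v :=
    match u, v with
    | Sum.inl i, Sum.inl j => i ≠ j
    | Sum.inl i, Sum.inr j => i = j
    | Sum.inr i, Sum.inl j => i = j
    | Sum.inr _, Sum.inr _ => False
  symm := by
    constructor
    rintro (i | i) (j | j) h
    · exact Ne.symm h
    · exact Eq.symm h
    · exact Eq.symm h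
    · exact h
  loopless := by
    constructor
    rintro (i | i) h
    · exact h rfl
    · exact h

instance thinSpider.adjDecidable (k : ℕ) : DecidableRel (thinSpider k).Adj := by
  rintro (i | i) (j | j)
  · exact inferInstanceAs (Decidable (i ≠ j))
  · exact inferInstanceAs (Decidable (i = j))
  · exact inferInstanceAs (Decidable (i = j))
  · exact inferInstanceAs (Decidable False)

namespace SepDom

variable {V : Type*} [Fintype V] [DecidableEq V] {G : SimpleGraph V} [DecidableRel G.Adj]
  {C : Finset V}

theorem IsOSet.isLSet (hC : IsOSet G C) : IsLSet G C :=
  fun u _ v _ huv => hC u v huv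

theorem isOSet_of_exists_adj_not_iff
    (hsep : ∀ u v, u ≠ v → ∃ c ∈ C, ¬(G.Adj u c ↔ G.Adj v c)) : IsOSet G C := by
  intro u v huv
  by_contra hne
  obtain ⟨c, hc, hc_sep⟩ := hsep u v hne
  have hc_trace := congrArg (c ∈ ·) huv
  simp only [mem_inter, SimpleGraph.mem_neighborFinset, hc, and_true, eq_iff_iff] at hc_trace
  exact hc_sep hc_trace

theorem lNum_eq_card (hC : IsLSet G C) (hmin : ∀ D, IsLSet G D → #C ≤ #D) : lNum G = #C :=
  IsLeast.csInf_eq ⟨⟨C, hC, rfl⟩, by rintro _ ⟨D, hD, rfl⟩; exact hmin D hD⟩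

theorem oNum_eq_card (hC : IsOSet G C) (hmin : ∀ D, IsOSet G D → #C ≤ #D) : oNum G = #C :=
  IsLeast.csInf_eq ⟨⟨C, hC, rfl⟩, by rintro _ ⟨D, hD, rfl⟩; exact hmin D hD⟩

end SepDom

theorem exists_ne_and_eq_or_eq {α : Type*} {i j : α} (hij : i ≠ j) (a : α) :
    ∃ t ≠ a, t = i ∨ t = j := by
  by_cases hi : i = a
  · exact ⟨j, fun h => hij (hi.trans h.symm), Or.inr rfl⟩
  · exact ⟨i, hi, Or.inl rfl⟩

theorem exists_ne_ne_ne_of_four_le {k : ℕ} (hk : 4 ≤ k) (a b c : Fin k) :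
    ∃ t, t ≠ a ∧ t ≠ b ∧ t ≠ c := by
  have h_lt : #{a, b, c} < #(univ : Finset (Fin k)) := by
    rw [card_univ, Fintype.card_fin]
    exact card_le_three.trans_lt (by omega)
  obtain ⟨t, -, ht⟩ := exists_mem_notMem_of_card_lt_card h_lt
  exact ⟨t, by simpa only [mem_insert, mem_singleton, not_or] using ht⟩

section thinSpider

variable {k : ℕ}

@[simp]
theorem thinSpider_adj_inl_inl (i j : Fin k) :
    (thinSpider k).Adj (Sum.inl i) (Sum.inl j) ↔ i ≠ j := Iff.rfl

@[simp]
theorem thinSpider_adj_inr_inl (i j : Fin k) :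
    (thinSpider k).Adj (Sum.inr i) (Sum.inl j) ↔ i = j := Iff.rfl

@[simp]
theorem thinSpider_not_adj_inr_inr (i j : Fin k) :
    ¬(thinSpider k).Adj (Sum.inr i) (Sum.inr j) := id

theorem thinSpider_neighborFinset_inr (i : Fin k) :
    (thinSpider k).neighborFinset (Sum.inr i) = {Sum.inl i} := by
  ext (j | j) <;> simp [eq_comm]

theorem thinSpider_card_le_of_isLSet {C : Finset (Fin k ⊕ Fin k)}
    (hC : IsLSet (thinSpider k) C) : k - 1 ≤ #C := by
  set I := C.image (Sum.elim id id)
  have h_free : ∀ i ∉ I, Sum.inl i ∉ C ∧ Sum.inr i ∉ C := fun i hi =>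
    ⟨fun h => hi (mem_image_of_mem _ h), fun h => hi (mem_image_of_mem _ h)⟩
  have h_compl : #Iᶜ ≤ 1 := by
    refine card_le_one.mpr fun i hi j hj => ?_
    obtain ⟨hqi, hsi⟩ := h_free i (mem_compl.mp hi)
    obtain ⟨hqj, hsj⟩ := h_free j (mem_compl.mp hj)
    refine Sum.inr_injective (hC _ hsi _ hsj ?_)
    rw [thinSpider_neighborFinset_inr, thinSpider_neighborFinset_inr,
      singleton_inter_of_notMem hqi, singleton_inter_of_notMem hqj]
  calc k - 1 ≤ #I := by rw [card_compl, Fintype.card_fin] at h_compl; omega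
    _ ≤ #C := card_image_le

theorem thinSpider_isOSet_inl_erase (hk : 4 ≤ k) (a : Fin k) :
    IsOSet (thinSpider k) ((univ.erase a).map .inl) := by
  suffices h : ∀ u v, u ≠ v → ∃ t ≠ a,
      ¬((thinSpider k).Adj u (.inl t) ↔ (thinSpider k).Adj v (.inl t)) by
    refine isOSet_of_exists_adj_not_iff fun u v huv => ?_
    obtain ⟨t, hta, ht⟩ := h u v huv
    exact ⟨.inl t, by simpa using hta, ht⟩
  rintro (i | i) (j | j) huv
  · have hij : i ≠ j := Sum.inl_injective.ne_iff.mp huv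
    obtain ⟨t, hta, ht⟩ := exists_ne_and_eq_or_eq hij a
    refine ⟨t, hta, ?_⟩
    rcases ht with rfl | rfl <;> simp [hij, hij.symm]
  · obtain ⟨t, hti, htj, hta⟩ := exists_ne_ne_ne_of_four_le hk i j a
    exact ⟨t, hta, by simp [Ne.symm hti, Ne.symm htj]⟩
  · obtain ⟨t, hti, htj, hta⟩ := exists_ne_ne_ne_of_four_le hk i j a
    exact ⟨t, hta, by simp [Ne.symm hti, Ne.symm htj]⟩
  · have hij : i ≠ j := Sum.inr_injective.ne_iff.mp huv
    obtain ⟨t, hta, ht⟩ := exists_ne_and_eq_or_eq hij a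
    refine ⟨t, hta, ?_⟩
    rcases ht with rfl | rfl <;> simp [hij, hij.symm]

end thinSpider

theorem thinSpider_lNum_oNum (k : ℕ) (hk : 4 ≤ k) :
    lNum (thinSpider k) = k - 1 ∧ oNum (thinSpider k) = k - 1 := by
  set C := (univ.erase (⟨0, by omega⟩ : Fin k)).map .inl
  have hC : IsOSet (thinSpider k) C := thinSpider_isOSet_inl_erase hk _
  have hcard : #C = k - 1 := by simp [C]
  rw [← hcard]
  exact ⟨lNum_eq_card hC.isLSet fun D hD => hcard ▸ thinSpider_card_le_of_isLSet hD,
    oNum_eq_card hC fun D hD => hcard ▸ thinSpider_card_le_of_isLSet hD.isLSet⟩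
end

section
/- For every integer k ≥ 4, the thin headless spider H_k satisfies γ^I(H_k) = k + 1. -/
open Finset

open SepDom

/-! Split a vertex set as `C = A ⊔ B` with `A ⊆ Q` and `B ⊆ S`. Then
`N[q_i] ∩ C = A ⊔ (B ∩ {s_i})` and `N[s_i] ∩ C = (A ∩ {q_i}) ⊔ (B ∩ {s_i})`, so `C` separates
`q_i` from `q_j` iff `s_i ∈ B` or `s_j ∈ B`, and `q_i` from `s_i` iff `A ⊄ {q_i}`; all other pairs
are then separated automatically. Hence `C` is an I-set iff `B` misses at most one `s_i` and
`|A| ≥ 2`, which forces `|C| ≥ (k - 1) + 2`, and `{q_a, q_b} ∪ (S \ {s_a})` attains this. -/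

namespace Finset

variable {α β : Type*} [DecidableEq α] [DecidableEq β]

lemma disjSum_inter (s : Finset α) (t : Finset β) (u : Finset (α ⊕ β)) :
    s.disjSum t ∩ u = (s ∩ u.toLeft).disjSum (t ∩ u.toRight) := by
  ext (a | b) <;> simp

lemma eq_of_singleton_inter_eq_of_card_compl_le_one [Fintype α] {s : Finset α} {a b : α}
    (hs : #sᶜ ≤ 1) (h : {a} ∩ s = {b} ∩ s) : a = b := by
  by_cases ha : a ∈ s
  · simpa [ha] using congrArg (a ∈ ·) h
  by_cases hb : b ∈ s
  · simpa [hb, eq_comm] using congrArg (b ∈ ·) h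
  exact card_le_one.1 hs a (mem_compl.2 ha) b (mem_compl.2 hb)

end Finset

namespace SepDom

variable {V : Type*} [Fintype V] [DecidableEq V]

theorem iNum_eq_card {G : SimpleGraph V} [DecidableRel G.Adj] {C : Finset V}
    (hC : IsISet G C) (hmin : ∀ D, IsISet G D → #C ≤ #D) : iNum G = #C :=
  le_antisymm (Nat.sInf_le ⟨C, hC, rfl⟩)
    (le_csInf ⟨_, C, hC, rfl⟩ fun _ ⟨D, hD, hn⟩ => hn ▸ hmin D hD)

end SepDom

namespace thinSpider

variable {k : ℕ}

@[simp] lemma adj_inl_inl {i j : Fin k} : (thinSpider k).Adj (.inl i) (.inl j) ↔ i ≠ j := Iff.rfl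
@[simp] lemma adj_inl_inr {i j : Fin k} : (thinSpider k).Adj (.inl i) (.inr j) ↔ i = j := Iff.rfl
@[simp] lemma adj_inr_inl {i j : Fin k} : (thinSpider k).Adj (.inr i) (.inl j) ↔ i = j := Iff.rfl
@[simp] lemma not_adj_inr_inr {i j : Fin k} : ¬(thinSpider k).Adj (.inr i) (.inr j) := id

lemma closedNbhd_inl_inter (i : Fin k) (C : Finset (Fin k ⊕ Fin k)) :
    closedNbhd (thinSpider k) (.inl i) ∩ C = C.toLeft.disjSum ({i} ∩ C.toRight) := by
  have : closedNbhd (thinSpider k) (.inl i) = univ.disjSum {i} := by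
    ext (j | j) <;> simp [closedNbhd, eq_comm, em]
  rw [this, disjSum_inter, univ_inter]

lemma closedNbhd_inr_inter (i : Fin k) (C : Finset (Fin k ⊕ Fin k)) :
    closedNbhd (thinSpider k) (.inr i) ∩ C = ({i} ∩ C.toLeft).disjSum ({i} ∩ C.toRight) := by
  have : closedNbhd (thinSpider k) (.inr i) = ({i} : Finset (Fin k)).disjSum {i} := by
    ext (j | j) <;> simp [closedNbhd, eq_comm]
  rw [this, disjSum_inter]

theorem isISet_iff [NeZero k] (C : Finset (Fin k ⊕ Fin k)) :
    IsISet (thinSpider k) C ↔ #C.toRightᶜ ≤ 1 ∧ 1 < #C.toLeft := by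
  constructor
  · intro hC
    refine ⟨card_le_one.2 fun i hi j hj => Sum.inl_injective (hC _ _ ?_), ?_⟩
    · rw [closedNbhd_inl_inter, closedNbhd_inl_inter, singleton_inter_of_notMem (mem_compl.1 hi),
        singleton_inter_of_notMem (mem_compl.1 hj)]
    · by_contra! hL
      obtain ⟨i, hi⟩ := card_le_one_iff_subset_singleton.1 hL
      refine Sum.inl_ne_inr (hC (.inl i) (.inr i) ?_)
      rw [closedNbhd_inl_inter, closedNbhd_inr_inter, inter_eq_right.2 hi]
  · rintro ⟨hR, hL⟩
    have hL' : ∀ j, ¬C.toLeft ⊆ {j} := fun j hj =>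
      hL.not_ge (card_le_one_iff_subset_singleton.2 ⟨j, hj⟩)
    rintro (i | i) (j | j) h
    all_goals simp only [closedNbhd_inl_inter, closedNbhd_inr_inter, disjSum_inj] at h
    · exact congrArg _ (eq_of_singleton_inter_eq_of_card_compl_le_one hR h.2)
    · exact (hL' j (inter_eq_right.1 h.1.symm)).elim
    · exact (hL' i (inter_eq_right.1 h.1)).elim
    · exact congrArg _ (eq_of_singleton_inter_eq_of_card_compl_le_one hR h.2)

theorem card_le_of_isISet [NeZero k] {C : Finset (Fin k ⊕ Fin k)}
    (hC : IsISet (thinSpider k) C) : k + 1 ≤ #C := by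
  obtain ⟨hR, hL⟩ := (isISet_iff C).1 hC
  rw [card_compl, Fintype.card_fin] at hR
  rw [← card_toLeft_add_card_toRight]
  omega

theorem isISet_pair_disjSum_compl {a b : Fin k} (hab : a ≠ b) :
    IsISet (thinSpider k) (({a, b} : Finset (Fin k)).disjSum {a}ᶜ) := by
  have : NeZero k := ⟨a.pos.ne'⟩
  rw [isISet_iff, toLeft_disjSum, toRight_disjSum, compl_compl, card_pair hab, card_singleton]
  omega

end thinSpider

theorem thinSpider_iNum (k : ℕ) (hk : 4 ≤ k) :
    iNum (thinSpider k) = k + 1 := by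
  have : NeZero k := ⟨by omega⟩
  have : Nontrivial (Fin k) := Fin.nontrivial_iff_two_le.2 (by omega)
  obtain ⟨a, b, hab⟩ := exists_pair_ne (Fin k)
  have hC := thinSpider.isISet_pair_disjSum_compl hab
  have hcard : #(({a, b} : Finset (Fin k)).disjSum {a}ᶜ) = k + 1 := by
    rw [card_disjSum, card_pair hab, card_compl, card_singleton, Fintype.card_fin]
    omega
  rw [← hcard]
  exact iNum_eq_card hC fun D hD => hcard ▸ thinSpider.card_le_of_isISet hD
end

section
/- For every finite simple graph G without closed twins, the I-number of G equals the O-number of its complement, i.e., γ^I(G) = γ^O(Ḡ). -/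
open Finset

open SepDom

lemma compl_nbhd_inter {V : Type*} [Fintype V] [DecidableEq V]
    (G : SimpleGraph V) [DecidableRel G.Adj] (C : Finset V) (v : V) :
    Gᶜ.neighborFinset v ∩ C = C \ (closedNbhd G v ∩ C) := by
  ext u
  simp only [Finset.mem_inter, SimpleGraph.mem_neighborFinset, SimpleGraph.compl_adj,
    Finset.mem_sdiff, closedNbhd, Finset.mem_insert]
  constructor
  · rintro ⟨⟨hne, hna⟩, hC⟩
    refine ⟨hC, fun h => ?_⟩
    rcases h with ⟨h1 | h1, _⟩
    · exact hne h1.symm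
    · exact hna h1
  · rintro ⟨hC, h⟩
    refine ⟨⟨fun he => h ⟨Or.inl he.symm, hC⟩, fun ha => h ⟨Or.inr ha, hC⟩⟩, hC⟩

lemma iset_iff_oset_compl {V : Type*} [Fintype V] [DecidableEq V]
    (G : SimpleGraph V) [DecidableRel G.Adj] (C : Finset V) :
    IsISet G C ↔ IsOSet Gᶜ C := by
  have key : ∀ u v : V, closedNbhd G u ∩ C = closedNbhd G v ∩ C ↔
      Gᶜ.neighborFinset u ∩ C = Gᶜ.neighborFinset v ∩ C := by
    intro u v
    rw [compl_nbhd_inter, compl_nbhd_inter]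
    constructor
    · intro h; rw [h]
    · intro h
      have hu : closedNbhd G u ∩ C = C \ (C \ (closedNbhd G u ∩ C)) := by
        ext x; simp only [Finset.mem_inter, Finset.mem_sdiff]; tauto
      have hv : closedNbhd G v ∩ C = C \ (C \ (closedNbhd G v ∩ C)) := by
        ext x; simp only [Finset.mem_inter, Finset.mem_sdiff]; tauto
      rw [hu, hv, h]
  constructor
  · intro hI u v h; exact hI u v ((key u v).mpr h)
  · intro hO u v h; exact hO u v ((key u v).mp h)


theorem i_eq_o_compl {V : Type*} [Fintype V] [DecidableEq V]
    (G : SimpleGraph V) [DecidableRel G.Adj] (hCT : ¬ HasClosedTwins G) :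
    iNum G = oNum Gᶜ := by
  unfold iNum oNum
  congr 1
  ext n
  simp only [Set.mem_setOf_eq]
  constructor
  · rintro ⟨C, hC, rfl⟩; exact ⟨C, (iset_iff_oset_compl G C).mp hC, rfl⟩
  · rintro ⟨C, hC, rfl⟩; exact ⟨C, (iset_iff_oset_compl G C).mpr hC, rfl⟩
end

section
/- For every finite simple graph G without open twins, the O-number of G equals the I-number of its complement, i.e., γ^O(G) = γ^I(Ḡ). -/
open Finset

open SepDom

theorem o_eq_i_compl {V : Type*} [Fintype V] [DecidableEq V]
    (G : SimpleGraph V) [DecidableRel G.Adj] (hOT : ¬ HasOpenTwins G) :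
    oNum G = iNum Gᶜ := by
  have key : ∀ (C : Finset V) (v : V),
      closedNbhd Gᶜ v ∩ C = C \ (G.neighborFinset v ∩ C) := by
    intro C v
    ext x
    by_cases hxv : x = v
    · subst hxv
      simp [closedNbhd, G.irrefl]
    · simp only [closedNbhd, Finset.mem_inter, Finset.mem_insert,
        SimpleGraph.mem_neighborFinset, SimpleGraph.compl_adj, Finset.mem_sdiff]
      constructor
      · rintro ⟨h, hc⟩
        rcases h with h | ⟨_, h⟩
        · exact absurd h hxv
        · tauto
      · rintro ⟨hc, h⟩
        exact ⟨Or.inr ⟨fun he => hxv he.symm, fun ha => h ⟨ha, hc⟩⟩, hc⟩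
  have equiv : ∀ C : Finset V, IsOSet G C ↔ IsISet Gᶜ C := by
    intro C
    constructor
    · intro h u v huv
      apply h u v
      rw [key, key] at huv
      have h1 : C \ (C \ (G.neighborFinset u ∩ C)) = C \ (C \ (G.neighborFinset v ∩ C)) := by
        rw [huv]
      rwa [Finset.sdiff_sdiff_eq_self (Finset.inter_subset_right),
        Finset.sdiff_sdiff_eq_self (Finset.inter_subset_right)] at h1
    · intro h u v huv
      apply h u v
      rw [key, key, huv]
  unfold oNum iNum
  congr 1
  ext n
  simp only [Set.mem_setOf_eq]
  constructor
  · rintro ⟨C, hC, hn⟩; exact ⟨C, (equiv C).1 hC, hn⟩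
  · rintro ⟨C, hC, hn⟩; exact ⟨C, (equiv C).2 hC, hn⟩
end

section
/- For every finite simple graph G without open twins and without closed twins, the F-number of G equals the F-number of its complement, i.e., γ^F(G) = γ^F(Ḡ). -/
open Finset

namespace SepDom
variable {V : Type*} [Fintype V] [DecidableEq V]

lemma key1 (G : SimpleGraph V) [DecidableRel G.Adj] (C : Finset V) (v : V) :
    closedNbhd Gᶜ v ∩ C = C \ (G.neighborFinset v ∩ C) := by
  ext x
  by_cases h : x = v
  · subst h; simp [closedNbhd]
  · simp [closedNbhd, h, SimpleGraph.compl_adj, Ne.symm h]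
    tauto

lemma key2 (G : SimpleGraph V) [DecidableRel G.Adj] (C : Finset V) (v : V) :
    Gᶜ.neighborFinset v ∩ C = C \ (closedNbhd G v ∩ C) := by
  ext x
  by_cases h : x = v
  · subst h; simp [closedNbhd]
  · simp [closedNbhd, h, SimpleGraph.compl_adj, Ne.symm h]
    tauto

lemma sdiff_cancel {A B C : Finset V} (hA : A ⊆ C) (hB : B ⊆ C)
    (h : C \ A = C \ B) : A = B := by
  have := congrArg (C \ ·) h
  simpa [Finset.sdiff_sdiff_eq_self hA, Finset.sdiff_sdiff_eq_self hB] using this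

lemma fset_compl_iff (G : SimpleGraph V) [DecidableRel G.Adj] (C : Finset V) :
    IsFSet Gᶜ C ↔ IsFSet G C := by
  constructor
  · rintro ⟨hO, hI⟩
    constructor
    · intro u v h
      apply hI u v
      rw [key1, key1, h]
    · intro u v h
      apply hO u v
      rw [key2, key2, h]
  · rintro ⟨hO, hI⟩
    constructor
    · intro u v h
      rw [key2, key2] at h
      exact hI u v (sdiff_cancel (Finset.inter_subset_right) (Finset.inter_subset_right) h)
    · intro u v h
      rw [key1, key1] at h
      exact hO u v (sdiff_cancel (Finset.inter_subset_right) (Finset.inter_subset_right) h)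

end SepDom

open SepDom

theorem f_compl {V : Type*} [Fintype V] [DecidableEq V]
    (G : SimpleGraph V) [DecidableRel G.Adj]
    (hOT : ¬ HasOpenTwins G) (hCT : ¬ HasClosedTwins G) :
    fNum G = fNum Gᶜ := by
  unfold fNum
  congr 1
  ext n
  constructor
  · rintro ⟨C, hC, rfl⟩
    exact ⟨C, (fset_compl_iff G C).mpr hC, rfl⟩
  · rintro ⟨C, hC, rfl⟩
    exact ⟨C, (fset_compl_iff G C).mp hC, rfl⟩
end

section
/- For every finite simple graph G without open twins, the OD-number of G and the ID-number of its complement Ḡ differ by at most one, i.e., γ^ID(Ḡ) ≤ γ^OD(G) + 1 and γ^OD(G) ≤ γ^ID(Ḡ) + 1. -/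
open Finset

open SepDom

section Aux

variable {V : Type*} [Fintype V] [DecidableEq V]

/-- Key trace identity: `C \\ (N̄[a] ∩ C) = N(a) ∩ C`. -/
lemma compl_trace (G : SimpleGraph V) [DecidableRel G.Adj] (C : Finset V) (a : V) :
    C \ (closedNbhd Gᶜ a ∩ C) = G.neighborFinset a ∩ C := by
  ext w
  simp only [Finset.mem_sdiff, Finset.mem_inter, closedNbhd, Finset.mem_insert,
    SimpleGraph.mem_neighborFinset, SimpleGraph.compl_adj]
  have h1 : ¬ G.Adj a a := G.irrefl
  have h2 : G.Adj a w → a ≠ w := fun h => G.ne_of_adj h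
  tauto

lemma compl_trace' (G : SimpleGraph V) [DecidableRel G.Adj] (C : Finset V) (a : V) :
    closedNbhd Gᶜ a ∩ C = C \ (G.neighborFinset a ∩ C) := by
  rw [← compl_trace G C a, Finset.sdiff_sdiff_self_left,
    Finset.inter_eq_right.mpr Finset.inter_subset_right]

lemma oset_of_iset_compl {G : SimpleGraph V} [DecidableRel G.Adj] {C : Finset V}
    (h : IsISet Gᶜ C) : IsOSet G C := by
  intro u v huv
  apply h u v
  rw [compl_trace', compl_trace', huv]

lemma iset_compl_of_oset {G : SimpleGraph V} [DecidableRel G.Adj] {C : Finset V}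
    (h : IsOSet G C) : IsISet Gᶜ C := by
  intro u v huv
  apply h u v
  have := compl_trace G C u
  rw [huv, compl_trace G C v] at this
  exact this.symm

lemma oset_superset {G : SimpleGraph V} [DecidableRel G.Adj] {C D : Finset V}
    (h : IsOSet G C) (hCD : C ⊆ D) : IsOSet G D := by
  intro u v huv
  apply h u v
  have : G.neighborFinset u ∩ D ∩ C = G.neighborFinset v ∩ D ∩ C := by rw [huv]
  rwa [Finset.inter_assoc, Finset.inter_assoc,
    Finset.inter_eq_right.mpr hCD] at this

lemma univ_oset {G : SimpleGraph V} [DecidableRel G.Adj] (hOT : ¬ HasOpenTwins G) :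
    IsOSet G (Finset.univ : Finset V) := by
  intro u v huv
  simp only [Finset.inter_univ] at huv
  by_contra hne
  apply hOT
  refine ⟨u, v, hne, fun hadj => ?_, huv⟩
  have hv : v ∈ G.neighborFinset u := by rwa [SimpleGraph.mem_neighborFinset]
  rw [huv] at hv
  simp at hv

end Aux

theorem od_id_compl_diff_le_one {V : Type*} [Fintype V] [DecidableEq V]
    (G : SimpleGraph V) [DecidableRel G.Adj] (hOT : ¬ HasOpenTwins G) :
    idNum Gᶜ ≤ odNum G + 1 ∧ odNum G ≤ idNum Gᶜ + 1 := by
  classical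
  have hUo : IsOSet G (Finset.univ : Finset V) := univ_oset hOT
  have hUi : IsISet Gᶜ (Finset.univ : Finset V) := iset_compl_of_oset hUo
  have hUd : IsDomSet G (Finset.univ : Finset V) := fun v =>
    ⟨v, by simp [closedNbhd]⟩
  have hUd' : IsDomSet Gᶜ (Finset.univ : Finset V) := fun v =>
    ⟨v, by simp [closedNbhd]⟩
  simp only [odNum, idNum]
  constructor
  · obtain ⟨C, hdom, hO, hcard⟩ :=
      Nat.sInf_mem (⟨_, Finset.univ, hUd, hUo, rfl⟩ :
        {n | ∃ C : Finset V, IsDomSet G C ∧ IsOSet G C ∧ C.card = n}.Nonempty)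
    by_cases hd : IsDomSet Gᶜ C
    · have : sInf {n | ∃ C : Finset V, IsDomSet Gᶜ C ∧ IsISet Gᶜ C ∧ C.card = n} ≤ C.card :=
        Nat.sInf_le ⟨C, hd, iset_compl_of_oset hO, rfl⟩
      omega
    · simp only [IsDomSet, not_forall] at hd
      obtain ⟨v, hv⟩ := hd
      rw [Finset.not_nonempty_iff_eq_empty] at hv
      have hI' : IsISet Gᶜ (insert v C) :=
        iset_compl_of_oset (oset_superset hO (Finset.subset_insert v C))
      have hd' : IsDomSet Gᶜ (insert v C) := by
        intro u
        by_cases hu : (closedNbhd Gᶜ u ∩ C).Nonempty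
        · exact hu.mono (Finset.inter_subset_inter le_rfl (Finset.subset_insert v C))
        · rw [Finset.not_nonempty_iff_eq_empty] at hu
          have h1 : G.neighborFinset u ∩ C = C := by
            rw [← compl_trace G C u, hu, Finset.sdiff_empty]
          have h2 : G.neighborFinset v ∩ C = C := by
            rw [← compl_trace G C v, hv, Finset.sdiff_empty]
          have huv : u = v := hO u v (h1.trans h2.symm)
          subst huv
          exact ⟨u, by simp [closedNbhd]⟩
      have : sInf {n | ∃ C : Finset V, IsDomSet Gᶜ C ∧ IsISet Gᶜ C ∧ C.card = n} ≤ (insert v C).card :=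
        Nat.sInf_le ⟨insert v C, hd', hI', rfl⟩
      have := Finset.card_insert_le v C
      omega
  · obtain ⟨C, hdom, hI, hcard⟩ :=
      Nat.sInf_mem (⟨_, Finset.univ, hUd', hUi, rfl⟩ :
        {n | ∃ C : Finset V, IsDomSet Gᶜ C ∧ IsISet Gᶜ C ∧ C.card = n}.Nonempty)
    have hO : IsOSet G C := oset_of_iset_compl hI
    by_cases hd : IsDomSet G C
    · have : sInf {n | ∃ C : Finset V, IsDomSet G C ∧ IsOSet G C ∧ C.card = n} ≤ C.card := Nat.sInf_le ⟨C, hd, hO, rfl⟩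
      omega
    · simp only [IsDomSet, not_forall] at hd
      obtain ⟨v, hv⟩ := hd
      rw [Finset.not_nonempty_iff_eq_empty] at hv
      have hO' : IsOSet G (insert v C) :=
        oset_superset hO (Finset.subset_insert v C)
      have hd' : IsDomSet G (insert v C) := by
        intro u
        by_cases hu : (closedNbhd G u ∩ C).Nonempty
        · exact hu.mono (Finset.inter_subset_inter le_rfl (Finset.subset_insert v C))
        · rw [Finset.not_nonempty_iff_eq_empty] at hu
          have hsub : ∀ a : V, G.neighborFinset a ⊆ closedNbhd G a := fun a =>
            Finset.subset_insert a _
          have h1 : G.neighborFinset u ∩ C = ∅ :=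
            Finset.subset_empty.mp (hu ▸ Finset.inter_subset_inter (hsub u) le_rfl)
          have h2 : G.neighborFinset v ∩ C = ∅ :=
            Finset.subset_empty.mp (hv ▸ Finset.inter_subset_inter (hsub v) le_rfl)
          have huv : u = v := hO u v (h1.trans h2.symm)
          subst huv
          exact ⟨u, by simp [closedNbhd]⟩
      have : sInf {n | ∃ C : Finset V, IsDomSet G C ∧ IsOSet G C ∧ C.card = n} ≤ (insert v C).card :=
        Nat.sInf_le ⟨insert v C, hd', hO', rfl⟩
      have := Finset.card_insert_le v C
      omega
end
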